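/- arXiv:2604.20409 — 2 statements merged into one kernel-verified Lean document; each statement's English description precedes it below -/
import Mathlib

section
/- Let ν be a probability measure on a measurable space Z, let Θ be a countable nonempty index set, and let f_θ : Z → ℝ (θ ∈ Θ) be measurable functions with |f_θ(z)| ≤ M for all θ and z. Let Z_1, …, Z_n be i.i.d. with law ν and let σ_1, …, σ_n be i.i.d. uniform on {−1, +1}, independent of the Z_i. Then E[ sup_{θ∈Θ} | E_ν[f_θ] − (1/n) Σ_{i=1}^n f_θ(Z_i) | ] ≤ 2 · E[ sup_{θ∈Θ} | (1/n) Σ_{i=1}^n σ_i f_θ(Z_i) | ]. -/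
open MeasureTheory

/-- The Rademacher distribution on `ℝ`: uniform on `{-1, +1}`. -/
noncomputable def rademacher : Measure ℝ :=
  (1/2 : ENNReal) • Measure.dirac (1 : ℝ) + (1/2 : ENNReal) • Measure.dirac (-1 : ℝ)

instance : IsProbabilityMeasure rademacher := by
  constructor
  simp [rademacher, Measure.add_apply, Measure.smul_apply, smul_eq_mul]
  exact ENNReal.inv_two_add_inv_two


open Set


private lemma integrable_of_bdd {α : Type*} [MeasurableSpace α] {κ : Measure α}
    [IsFiniteMeasure κ] {g : α → ℝ} (hg : AEStronglyMeasurable g κ) {C : ℝ}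
    (h : ∀ᵐ x ∂κ, |g x| ≤ C) : Integrable g κ :=
  (integrable_const C).mono' hg (by simpa [Real.norm_eq_abs] using h)

private lemma bdd_of_le {α : Type*} {g : α → ℝ} {C : ℝ} (h : ∀ a, g a ≤ C) :
    BddAbove (Set.range g) := ⟨C, by rintro _ ⟨a, rfl⟩; exact h a⟩

private lemma measurePreserving_eval' {ι : Type*} [Fintype ι] {α : Type*}
    [MeasurableSpace α] (μ : ι → Measure α) [∀ i, IsProbabilityMeasure (μ i)]
    (i : ι) : MeasurePreserving (Function.eval i) (Measure.pi μ) (μ i) := by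
  classical
  refine ⟨measurable_pi_apply i, ?_⟩
  ext s hs
  rw [Measure.map_apply (measurable_pi_apply i) hs]
  have h1 : Function.eval i ⁻¹' s = Set.pi Set.univ (Function.update (fun _ : ι => (Set.univ : Set α)) i s) := by
    ext x
    simp only [Set.mem_preimage, Function.eval, Set.mem_pi, Set.mem_univ, forall_true_left]
    constructor
    · intro hx j
      rcases eq_or_ne j i with rfl | hj
      · simpa using hx
      · simp [Function.update_of_ne hj]
    · intro hx
      simpa using hx i
  rw [h1, Measure.pi_pi]
  rw [Finset.prod_eq_single_of_mem i (Finset.mem_univ i)]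
  · simp
  · intro j _ hj
    simp [Function.update_of_ne hj]

private lemma rademacher_pm1 : rademacher ({1, -1} : Set ℝ) = 1 := by
  have h1 : (1:ℝ) ∈ ({1,-1} : Set ℝ) := by norm_num
  have h2 : (-1:ℝ) ∈ ({1,-1} : Set ℝ) := by norm_num
  simp [rademacher, Measure.dirac_apply, h1, h2, smul_eq_mul]
  exact ENNReal.inv_two_add_inv_two

private lemma pm_measurableSet : MeasurableSet ({1, -1} : Set ℝ) :=
  (Set.toFinite _).measurableSet

/-- **symmetrization.** For a countable, uniformly bounded family of measurable
functions, the expected uniform deviation between population and empirical means over an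
i.i.d. sample of size `n` is at most twice the expected supremum of the Rademacher-signed
empirical averages (with the signs independent of the sample). -/
theorem symmetrization
    {Z : Type*} [MeasurableSpace Z] (ν : Measure Z) [IsProbabilityMeasure ν]
    {Θ : Type*} [Countable Θ] [Nonempty Θ]
    (f : Θ → Z → ℝ) (hf : ∀ θ, Measurable (f θ))
    (M : ℝ) (hbd : ∀ θ z, |f θ z| ≤ M)
    (n : ℕ) (hn : 0 < n) :
    (∫ ω : Fin n → Z,
        ⨆ θ, |(∫ z, f θ z ∂ν) - (1 / (n : ℝ)) * ∑ i, f θ (ω i)|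
        ∂(Measure.pi fun _ : Fin n => ν))
      ≤ 2 * ∫ ωσ : (Fin n → Z) × (Fin n → ℝ),
          ⨆ θ, |(1 / (n : ℝ)) * ∑ i, ωσ.2 i * f θ (ωσ.1 i)|
          ∂((Measure.pi fun _ : Fin n => ν).prod
            (Measure.pi fun _ : Fin n => rademacher)) := by
  classical
  obtain ⟨θ₀⟩ := ‹Nonempty Θ›
  have hZ : Nonempty Z := by
    by_contra h
    rw [not_nonempty_iff] at h
    have h1 : (Set.univ : Set Z) = ∅ := Set.univ_eq_empty_iff.mpr h
    have := measure_univ (μ := ν)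
    rw [h1] at this; simp at this
  obtain ⟨z₀⟩ := hZ
  have hM0 : (0:ℝ) ≤ M := le_trans (abs_nonneg _) (hbd θ₀ z₀)
  have hn' : (0:ℝ) < (n:ℝ) := by exact_mod_cast hn
  set μ : Measure (Fin n → Z) := Measure.pi fun _ => ν with hμdef
  set ρ : Measure (Fin n → ℝ) := Measure.pi fun _ => rademacher with hρdef
  set A : Θ → (Fin n → Z) → ℝ := fun θ ω => (1 / (n:ℝ)) * ∑ i, f θ (ω i) with hAdef
  have hAm : ∀ θ, Measurable (A θ) := fun θ =>
    measurable_const.mul (Finset.measurable_sum _ fun i _ => (hf θ).comp (measurable_pi_apply i))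
  have hAb : ∀ θ ω, |A θ ω| ≤ M := by
    intro θ ω
    calc |A θ ω| = (1/(n:ℝ)) * |∑ i, f θ (ω i)| := by
          rw [hAdef]; rw [abs_mul, abs_of_nonneg (by positivity)]
      _ ≤ (1/(n:ℝ)) * ∑ i, |f θ (ω i)| := by
          gcongr; exact Finset.abs_sum_le_sum_abs _ _
      _ ≤ (1/(n:ℝ)) * ∑ _i : Fin n, M := by
          gcongr with i
          exact hbd θ _
      _ = M := by
          simp only [Finset.sum_const, Finset.card_fin, nsmul_eq_mul]
          field_simp
  have hint1 : ∀ θ, ∀ i : Fin n, Integrable (fun ω : Fin n → Z => f θ (ω i)) μ := fun θ i =>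
    integrable_of_bdd ((hf θ).comp (measurable_pi_apply i)).aestronglyMeasurable
      (ae_of_all _ fun ω => hbd θ _)
  have hone : ∀ θ, ∀ i : Fin n, ∫ ω, f θ (ω i) ∂μ = ∫ z, f θ z ∂ν := by
    intro θ i
    have h := integral_map (φ := Function.eval i) (μ := μ)
      (measurable_pi_apply i).aemeasurable (hf θ).aestronglyMeasurable
    rw [(measurePreserving_eval' (fun _ : Fin n => ν) i).map_eq] at h
    exact h.symm
  have hmean : ∀ θ, ∫ ω, A θ ω ∂μ = ∫ z, f θ z ∂ν := by
    intro θ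
    simp only [hAdef]
    rw [integral_const_mul, integral_finset_sum _ (fun i _ => hint1 θ i)]
    rw [Finset.sum_congr rfl (fun i _ => hone θ i), Finset.sum_const, Finset.card_fin,
      nsmul_eq_mul]
    field_simp
  -- the symmetrized difference function on the product
  set S : (Fin n → Z) × (Fin n → Z) → ℝ := fun p => ⨆ θ, |A θ p.1 - A θ p.2| with hSdef
  have hSm : Measurable S := Measurable.iSup fun θ =>
    (((hAm θ).comp measurable_fst).sub ((hAm θ).comp measurable_snd)).abs
  have hSb : ∀ p, S p ≤ 2 * M := fun p => ciSup_le fun θ => by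
    calc |A θ p.1 - A θ p.2| ≤ |A θ p.1| + |A θ p.2| := abs_sub _ _
      _ ≤ M + M := add_le_add (hAb _ _) (hAb _ _)
      _ = 2 * M := by ring
  have hS0 : ∀ p, 0 ≤ S p := fun p => Real.iSup_nonneg fun θ => abs_nonneg _
  have hSabs : ∀ p, |S p| ≤ 2*M := fun p => by
    rw [abs_of_nonneg (hS0 p)]; exact hSb p
  have hSint : Integrable S (μ.prod μ) :=
    integrable_of_bdd hSm.aestronglyMeasurable (ae_of_all _ hSabs)
  -- Step A : LHS ≤ ∫ S
  have hAint : ∀ θ, Integrable (A θ) μ := fun θ =>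
    integrable_of_bdd (hAm θ).aestronglyMeasurable (ae_of_all _ fun ω => hAb θ ω)
  have hdiffb : ∀ (ω1 ω2 : Fin n → Z) θ, |A θ ω1 - A θ ω2| ≤ 2 * M := by
    intro ω1 ω2 θ
    calc |A θ ω1 - A θ ω2| ≤ |A θ ω1| + |A θ ω2| := abs_sub _ _
      _ ≤ M + M := add_le_add (hAb _ _) (hAb _ _)
      _ = 2 * M := by ring
  have stepA : (∫ ω, ⨆ θ, |(∫ z, f θ z ∂ν) - A θ ω| ∂μ) ≤ ∫ p, S p ∂(μ.prod μ) := by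
    have hpt : ∀ ω2, (⨆ θ, |(∫ z, f θ z ∂ν) - A θ ω2|) ≤ ∫ ω1, S (ω1, ω2) ∂μ := by
      intro ω2
      refine ciSup_le fun θ => ?_
      have h1 : (∫ z, f θ z ∂ν) - A θ ω2 = ∫ ω1, (A θ ω1 - A θ ω2) ∂μ := by
        rw [integral_sub (hAint θ) (integrable_const _), integral_const]
        simp [hmean θ]
      rw [h1]
      have h2 : |∫ ω1, (A θ ω1 - A θ ω2) ∂μ| ≤ ∫ ω1, |A θ ω1 - A θ ω2| ∂μ := by
        simpa [Real.norm_eq_abs] using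
          norm_integral_le_integral_norm (μ := μ) (fun ω1 => A θ ω1 - A θ ω2)
      refine h2.trans (integral_mono ?_ ?_ ?_)
      · exact integrable_of_bdd (((hAm θ).sub measurable_const).abs).aestronglyMeasurable
          (ae_of_all _ fun ω1 => by rw [abs_abs]; exact hdiffb ω1 ω2 θ)
      · exact integrable_of_bdd
          (hSm.comp (measurable_id.prodMk measurable_const)).aestronglyMeasurable
          (ae_of_all _ fun ω1 => hSabs _)
      · intro ω1
        exact le_ciSup (bdd_of_le fun θ' => hdiffb ω1 ω2 θ') θ
    have hLm : Measurable (fun ω2 => ⨆ θ, |(∫ z, f θ z ∂ν) - A θ ω2|) :=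
      Measurable.iSup fun θ => (measurable_const.sub (hAm θ)).abs
    have hLb : ∀ ω2, abs (⨆ θ, |(∫ z, f θ z ∂ν) - A θ ω2|) ≤ 2 * M := by
      intro ω2
      rw [abs_of_nonneg (Real.iSup_nonneg fun θ => abs_nonneg _)]
      refine ciSup_le fun θ => ?_
      calc |(∫ z, f θ z ∂ν) - A θ ω2| ≤ |∫ z, f θ z ∂ν| + |A θ ω2| := abs_sub _ _
        _ ≤ M + M := by
            refine add_le_add ?_ (hAb _ _)
            calc |∫ z, f θ z ∂ν| ≤ ∫ z, |f θ z| ∂ν := by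
                  simpa [Real.norm_eq_abs] using norm_integral_le_integral_norm (μ := ν) (f θ)
              _ ≤ ∫ _z, M ∂ν := integral_mono
                  (integrable_of_bdd (hf θ).abs.aestronglyMeasurable
                    (ae_of_all _ fun z => by rw [abs_abs]; exact hbd θ z))
                  (integrable_const _) (fun z => hbd θ z)
              _ = M := by simp
        _ = 2 * M := by ring
    calc (∫ ω, ⨆ θ, |(∫ z, f θ z ∂ν) - A θ ω| ∂μ)
        ≤ ∫ ω2, (∫ ω1, S (ω1, ω2) ∂μ) ∂μ := by
          refine integral_mono ?_ hSint.integral_prod_right hpt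
          exact integrable_of_bdd hLm.aestronglyMeasurable (ae_of_all _ hLb)
      _ = ∫ p, S p ∂(μ.prod μ) := (integral_prod_symm S hSint).symm
  -- signed functions
  set B : (Fin n → ℝ) × (Fin n → Z) → ℝ :=
    fun q => ⨆ θ, |(1 / (n:ℝ)) * ∑ i, q.1 i * f θ (q.2 i)| with hBdef
  have hBm : Measurable B := Measurable.iSup fun θ =>
    (measurable_const.mul (Finset.measurable_sum _ fun i _ =>
      ((measurable_pi_apply i).comp measurable_fst).mul
        ((hf θ).comp ((measurable_pi_apply i).comp measurable_snd)))).abs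
  have hB0 : ∀ q, 0 ≤ B q := fun q => Real.iSup_nonneg fun θ => abs_nonneg _
  have hBb : ∀ σ, (∀ i, σ i = 1 ∨ σ i = -1) → ∀ ω, B (σ, ω) ≤ M := by
    intro σ hσ ω
    refine ciSup_le fun θ => ?_
    have habs1 : ∀ i : Fin n, |σ i| = 1 := by
      intro i; rcases hσ i with h | h <;> simp [h]
    calc |(1 / (n:ℝ)) * ∑ i, σ i * f θ (ω i)|
        = (1/(n:ℝ)) * |∑ i, σ i * f θ (ω i)| := by rw [abs_mul, abs_of_nonneg (by positivity)]
      _ ≤ (1/(n:ℝ)) * ∑ i, |σ i * f θ (ω i)| := by gcongr; exact Finset.abs_sum_le_sum_abs _ _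
      _ ≤ (1/(n:ℝ)) * ∑ _i : Fin n, M := by
          gcongr with i
          rw [abs_mul, habs1 i, one_mul]; exact hbd θ _
      _ = M := by
          simp only [Finset.sum_const, Finset.card_fin, nsmul_eq_mul]; field_simp
  -- Step B: sign-flip invariance   ∫ S = ∫ G σ   for σ with ±1 entries
  have stepB : ∀ σ : Fin n → ℝ, (∀ i, σ i = 1 ∨ σ i = -1) →
      ∫ p, S p ∂(μ.prod μ)
        = ∫ p : (Fin n → Z) × (Fin n → Z),
            (⨆ θ, |(1 / (n:ℝ)) * ∑ i, σ i * (f θ (p.1 i) - f θ (p.2 i))|) ∂(μ.prod μ) := by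
    intro σ hσ
    set c : Fin n → (Z × Z ≃ᵐ Z × Z) := fun i =>
      if σ i = 1 then MeasurableEquiv.refl _ else (MeasurableEquiv.prodComm : Z × Z ≃ᵐ Z × Z) with hcdef
    have hc : ∀ i, MeasurePreserving (c i) (ν.prod ν) (ν.prod ν) := by
      intro i
      by_cases h : σ i = 1
      · simp only [hcdef, if_pos h]
        exact MeasurePreserving.id _
      · simp only [hcdef, if_neg h]
        exact Measure.measurePreserving_swap
    set e := MeasurableEquiv.arrowProdEquivProdArrow Z Z (Fin n) with hedef
    set T : ((Fin n → Z) × (Fin n → Z)) ≃ᵐ ((Fin n → Z) × (Fin n → Z)) :=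
      (e.symm.trans (MeasurableEquiv.piCongrRight c)).trans e with hTdef
    have he : MeasurePreserving e (Measure.pi fun _ : Fin n => ν.prod ν) (μ.prod μ) :=
      measurePreserving_arrowProdEquivProdArrow Z Z (Fin n) (fun _ => ν) (fun _ => ν)
    have hpi : MeasurePreserving (MeasurableEquiv.piCongrRight c)
        (Measure.pi fun _ : Fin n => ν.prod ν) (Measure.pi fun _ : Fin n => ν.prod ν) := by
      have h := measurePreserving_pi (fun _ : Fin n => ν.prod ν) (fun _ : Fin n => ν.prod ν)
        (f := fun i => (c i : Z × Z → Z × Z)) hc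
      exact h
    have hT : MeasurePreserving T (μ.prod μ) (μ.prod μ) := by
      have h := he.comp (hpi.comp (he.symm e))
      exact h
    have hT1 : ∀ p : (Fin n → Z) × (Fin n → Z), ∀ i,
        (T p).1 i = (c i (p.1 i, p.2 i)).1 ∧ (T p).2 i = (c i (p.1 i, p.2 i)).2 :=
      fun p i => ⟨rfl, rfl⟩
    have hST : ∀ p : (Fin n → Z) × (Fin n → Z),
        S (T p) = ⨆ θ, |(1 / (n:ℝ)) * ∑ i, σ i * (f θ (p.1 i) - f θ (p.2 i))| := by
      intro p
      simp only [hSdef]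
      refine iSup_congr fun θ => ?_
      congr 1
      simp only [hAdef]
      rw [← mul_sub, ← Finset.sum_sub_distrib]
      congr 1
      refine Finset.sum_congr rfl fun i _ => ?_
      rw [(hT1 p i).1, (hT1 p i).2]
      by_cases h : σ i = 1
      · simp [hcdef, h]
      · have h' : σ i = -1 := (hσ i).resolve_left h
        simp only [hcdef, if_neg h, h']
        simp [MeasurableEquiv.prodComm, Equiv.prodComm]
    calc ∫ p, S p ∂(μ.prod μ) = ∫ p, S (T p) ∂(μ.prod μ) :=
          (hT.integral_comp T.measurableEmbedding S).symm
      _ = _ := integral_congr_ae (Filter.Eventually.of_forall fun p => hST p)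
  -- Step C: triangle inequality  ∫ G σ ≤ 2 ∫ B σ
  have stepC : ∀ σ : Fin n → ℝ, (∀ i, σ i = 1 ∨ σ i = -1) →
      (∫ p : (Fin n → Z) × (Fin n → Z),
          (⨆ θ, |(1 / (n:ℝ)) * ∑ i, σ i * (f θ (p.1 i) - f θ (p.2 i))|) ∂(μ.prod μ))
        ≤ 2 * ∫ ω, B (σ, ω) ∂μ := by
    intro σ hσ
    have habs1 : ∀ i : Fin n, |σ i| = 1 := by
      intro i; rcases hσ i with h | h <;> simp [h]
    have hterm : ∀ (ω : Fin n → Z) θ, |(1 / (n:ℝ)) * ∑ i, σ i * f θ (ω i)| ≤ M := by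
      intro ω θ
      calc |(1 / (n:ℝ)) * ∑ i, σ i * f θ (ω i)|
          = (1/(n:ℝ)) * |∑ i, σ i * f θ (ω i)| := by rw [abs_mul, abs_of_nonneg (by positivity)]
        _ ≤ (1/(n:ℝ)) * ∑ i, |σ i * f θ (ω i)| := by gcongr; exact Finset.abs_sum_le_sum_abs _ _
        _ ≤ (1/(n:ℝ)) * ∑ _i : Fin n, M := by
            gcongr with i
            rw [abs_mul, habs1 i, one_mul]; exact hbd θ _
        _ = M := by
            simp only [Finset.sum_const, Finset.card_fin, nsmul_eq_mul]; field_simp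
    have hGle : ∀ p : (Fin n → Z) × (Fin n → Z),
        (⨆ θ, |(1 / (n:ℝ)) * ∑ i, σ i * (f θ (p.1 i) - f θ (p.2 i))|)
          ≤ B (σ, p.1) + B (σ, p.2) := by
      intro p
      refine ciSup_le fun θ => ?_
      have hsplit : (1/(n:ℝ)) * ∑ i, σ i * (f θ (p.1 i) - f θ (p.2 i))
          = (1/(n:ℝ)) * ∑ i, σ i * f θ (p.1 i) - (1/(n:ℝ)) * ∑ i, σ i * f θ (p.2 i) := by
        rw [← mul_sub, ← Finset.sum_sub_distrib]
        congr 1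
        exact Finset.sum_congr rfl fun i _ => by ring
      rw [hsplit]
      refine (abs_sub _ _).trans (add_le_add ?_ ?_)
      · exact le_ciSup (bdd_of_le fun θ' => hterm p.1 θ') θ
      · exact le_ciSup (bdd_of_le fun θ' => hterm p.2 θ') θ
    have hGm : Measurable (fun p : (Fin n → Z) × (Fin n → Z) =>
        ⨆ θ, |(1 / (n:ℝ)) * ∑ i, σ i * (f θ (p.1 i) - f θ (p.2 i))|) :=
      Measurable.iSup fun θ =>
        (measurable_const.mul (Finset.measurable_sum _ fun i _ =>
          (measurable_const.mul (((hf θ).comp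
            ((measurable_pi_apply i).comp measurable_fst)).sub
            ((hf θ).comp ((measurable_pi_apply i).comp measurable_snd)))))).abs
    have hGb : ∀ p : (Fin n → Z) × (Fin n → Z),
        abs (⨆ θ, |(1 / (n:ℝ)) * ∑ i, σ i * (f θ (p.1 i) - f θ (p.2 i))|) ≤ 2 * M := by
      intro p
      rw [abs_of_nonneg (Real.iSup_nonneg fun θ => abs_nonneg _)]
      refine (hGle p).trans ((add_le_add (hBb σ hσ p.1) (hBb σ hσ p.2)).trans_eq (by ring))
    have hint1' : Integrable (fun p : (Fin n → Z) × (Fin n → Z) => B (σ, p.1)) (μ.prod μ) := by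
      refine integrable_of_bdd (C := M)
        ((hBm.comp (measurable_const.prodMk measurable_fst)).aestronglyMeasurable)
        (ae_of_all _ fun p => ?_)
      rw [abs_of_nonneg (hB0 _)]; exact hBb σ hσ p.1
    have hint2' : Integrable (fun p : (Fin n → Z) × (Fin n → Z) => B (σ, p.2)) (μ.prod μ) := by
      refine integrable_of_bdd (C := M)
        ((hBm.comp (measurable_const.prodMk measurable_snd)).aestronglyMeasurable)
        (ae_of_all _ fun p => ?_)
      rw [abs_of_nonneg (hB0 _)]; exact hBb σ hσ p.2
    have heq1 : ∫ p : (Fin n → Z) × (Fin n → Z), B (σ, p.1) ∂(μ.prod μ) = ∫ ω, B (σ, ω) ∂μ := by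
      rw [integral_prod _ hint1']
      simp
    have heq2 : ∫ p : (Fin n → Z) × (Fin n → Z), B (σ, p.2) ∂(μ.prod μ) = ∫ ω, B (σ, ω) ∂μ := by
      rw [integral_prod_symm _ hint2']
      simp
    calc (∫ p : (Fin n → Z) × (Fin n → Z),
            (⨆ θ, |(1 / (n:ℝ)) * ∑ i, σ i * (f θ (p.1 i) - f θ (p.2 i))|) ∂(μ.prod μ))
        ≤ ∫ p : (Fin n → Z) × (Fin n → Z), (B (σ, p.1) + B (σ, p.2)) ∂(μ.prod μ) :=
          integral_mono (integrable_of_bdd hGm.aestronglyMeasurable (ae_of_all _ hGb))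
            (hint1'.add hint2') hGle
      _ = (∫ p : (Fin n → Z) × (Fin n → Z), B (σ, p.1) ∂(μ.prod μ))
            + ∫ p : (Fin n → Z) × (Fin n → Z), B (σ, p.2) ∂(μ.prod μ) :=
          integral_add hint1' hint2'
      _ = 2 * ∫ ω, B (σ, ω) ∂μ := by rw [heq1, heq2]; ring
  -- a.e. the signs are ±1
  have hEfull : ρ (Set.pi Set.univ fun _ : Fin n => ({1, -1} : Set ℝ)) = 1 := by
    rw [hρdef, Measure.pi_pi]
    simp [rademacher_pm1]
  have hEc : ρ (Set.pi Set.univ fun _ : Fin n => ({1, -1} : Set ℝ))ᶜ = 0 := by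
    rw [prob_compl_eq_zero_iff (MeasurableSet.univ_pi fun _ => pm_measurableSet)]
    exact hEfull
  have hae : ∀ᵐ σ ∂ρ, ∀ i, σ i = 1 ∨ σ i = -1 := by
    rw [ae_iff]
    have h1 : {σ : Fin n → ℝ | ¬ ∀ i, σ i = 1 ∨ σ i = -1}
        = (Set.pi Set.univ fun _ : Fin n => ({1, -1} : Set ℝ))ᶜ := by
      ext σ
      simp [Set.mem_pi]
    rw [h1]
    exact hEc
  have hBint : Integrable B (ρ.prod μ) := by
    refine integrable_of_bdd (C := M) hBm.aestronglyMeasurable ?_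
    rw [ae_iff]
    refine measure_mono_null
      (t := ((Set.pi Set.univ fun _ : Fin n => ({1, -1} : Set ℝ))ᶜ) ×ˢ (Set.univ : Set (Fin n → Z)))
      (fun q hq => ?_) ?_
    · simp only [Set.mem_setOf_eq, not_le] at hq
      constructor
      · intro hmem
        have hσ : ∀ i, q.1 i = 1 ∨ q.1 i = -1 := by
          intro i
          have := hmem i (Set.mem_univ i)
          simpa using this
        have : |B q| ≤ M := by
          rw [abs_of_nonneg (hB0 q)]
          have := hBb q.1 hσ q.2
          simpa using this
        exact absurd this (not_le.mpr hq)
      · exact Set.mem_univ _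
    · rw [Measure.prod_prod, hEc, zero_mul]
  -- Step D: average over σ
  have stepD : (∫ p, S p ∂(μ.prod μ)) ≤ 2 * ∫ σ, (∫ ω, B (σ, ω) ∂μ) ∂ρ := by
    have hconst : (∫ p, S p ∂(μ.prod μ)) = ∫ _σ, (∫ p, S p ∂(μ.prod μ)) ∂ρ := by
      simp
    have hintB2 : Integrable (fun σ => 2 * ∫ ω, B (σ, ω) ∂μ) ρ :=
      (hBint.integral_prod_left).const_mul 2
    rw [hconst, ← integral_const_mul]
    refine integral_mono_ae (integrable_const _) hintB2 (hae.mono fun σ hσ => ?_)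
    rw [stepB σ hσ]
    exact stepC σ hσ
  -- Step E: identify RHS
  have stepE : (∫ σ, (∫ ω, B (σ, ω) ∂μ) ∂ρ)
      = ∫ ωσ : (Fin n → Z) × (Fin n → ℝ), B (ωσ.2, ωσ.1) ∂(μ.prod ρ) := by
    rw [← integral_prod _ hBint, ← integral_prod_swap B]
    rfl
  calc (∫ ω, ⨆ θ, |(∫ z, f θ z ∂ν) - (1 / (n:ℝ)) * ∑ i, f θ (ω i)| ∂μ)
      ≤ ∫ p, S p ∂(μ.prod μ) := stepA
    _ ≤ 2 * ∫ σ, (∫ ω, B (σ, ω) ∂μ) ∂ρ := stepD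
    _ = 2 * ∫ ωσ : (Fin n → Z) × (Fin n → ℝ), B (ωσ.2, ωσ.1) ∂(μ.prod ρ) := by rw [stepE]
end

section
/- (Theorem 1, population-risk bound.) Suppose |ℓ(f̂(x), k)| ≤ M for all x, k, assume E‖p_θ(X)‖² < ∞ for all θ, and suppose there exists θ* ∈ Θ with p_{θ*}(x) = p(x) for μ_X-almost every x. Then for every θ ∈ Θ, E_{X∼μ_X}[ |g_{ca,θ}(X) − g(X)| ] ≤ M · E_{X∼μ_X}[ ‖p_θ(X) − p(X)‖₁ ] ≤ M · √( K · ( B(θ) − B* ) ), where B(θ) = E_{(X,Y)∼μ}[ ‖p_θ(X) − e_Y‖² ] is the expected Brier loss of p_θ and B* = E_{(X,Y)∼μ}[ ‖p(X) − e_Y‖² ] is the expected Brier loss of the true conditional probability p. -/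
/-!
Because `p` disintegrates `μ`, integrating a function `F` of `(X, Y)` against `μ` amounts to
integrating `∑ₖ p x k * F (x, k)` against the marginal. Pointwise, the `p x`-average of the Brier
loss of a forecast `a` exceeds that of `p x` itself by exactly `‖a - p x‖²` (the Brier score is a
proper scoring rule), so `B(θ) - B* = E ‖pθ(X) - p(X)‖²`. The bound then follows from
`|g_{ca,θ} - g| ≤ M ‖pθ - p‖₁`, from `‖v‖₁² ≤ K ‖v‖²` and from `(E Z)² ≤ E Z²`.
-/

open MeasureTheory Finset
open scoped ENNReal

section BrierLoss

variable {ι : Type*} [Fintype ι] [DecidableEq ι]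

def brierLoss (q : ι → ℝ) (j : ι) : ℝ :=
  ∑ k, (q k - if j = k then 1 else 0) ^ 2

lemma brierLoss_nonneg (q : ι → ℝ) (j : ι) : 0 ≤ brierLoss q j :=
  sum_nonneg fun _ _ => sq_nonneg _

lemma brierLoss_eq (q : ι → ℝ) (j : ι) : brierLoss q j = ∑ k, q k ^ 2 - 2 * q j + 1 := by
  have hterm : ∀ k, (q k - if j = k then (1 : ℝ) else 0) ^ 2
      = q k ^ 2 - 2 * (if j = k then q k else 0) + (if j = k then 1 else 0) := by
    intro k; split_ifs <;> ring
  simp only [brierLoss, hterm, sum_add_distrib, sum_sub_distrib, ← mul_sum, sum_ite_eq,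
    mem_univ, if_true]

lemma brierLoss_le (q : ι → ℝ) (j : ι) : brierLoss q j ≤ 2 * ∑ k, q k ^ 2 + 2 := by
  have hj : q j ^ 2 ≤ ∑ k, q k ^ 2 :=
    single_le_sum (fun k _ => sq_nonneg (q k)) (mem_univ j)
  rw [brierLoss_eq]
  nlinarith [sq_nonneg (q j + 1)]

lemma measurable_brierLoss (j : ι) : Measurable fun q : ι → ℝ => brierLoss q j := by
  unfold brierLoss
  fun_prop

lemma sum_mul_brierLoss_sub_brierLoss {q : ι → ℝ} (hq : ∑ k, q k = 1) (a : ι → ℝ) :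
    ∑ j, q j * (brierLoss a j - brierLoss q j) = ∑ k, (a k - q k) ^ 2 := by
  have hterm : ∀ j, q j * (brierLoss a j - brierLoss q j)
      = q j * (∑ k, a k ^ 2 - ∑ k, q k ^ 2) + 2 * (q j ^ 2 - q j * a j) := by
    intro j; rw [brierLoss_eq, brierLoss_eq]; ring
  have hsq : ∀ k, (a k - q k) ^ 2 = a k ^ 2 - 2 * (q k * a k) + q k ^ 2 := fun k => by ring
  simp only [hterm, hsq, sum_add_distrib, sum_sub_distrib, ← mul_sum, ← sum_mul, hq]
  ring

end BrierLoss

lemma abs_sum_mul_sub_sum_mul_le {ι : Type*} (s : Finset ι) {c a b : ι → ℝ} {M : ℝ}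
    (hc : ∀ k ∈ s, |c k| ≤ M) :
    |∑ k ∈ s, c k * a k - ∑ k ∈ s, c k * b k| ≤ M * ∑ k ∈ s, |a k - b k| := by
  rw [← sum_sub_distrib, mul_sum]
  refine (abs_sum_le_sum_abs _ _).trans (sum_le_sum fun k hk => ?_)
  rw [← mul_sub, abs_mul]
  exact mul_le_mul_of_nonneg_right (hc k hk) (abs_nonneg _)

lemma integral_le_sqrt_integral_sq {α : Type*} [MeasurableSpace α] {ν : Measure α}
    [IsProbabilityMeasure ν] {f : α → ℝ} (hf : MemLp f 2 ν) :
    ∫ x, f x ∂ν ≤ √(∫ x, f x ^ 2 ∂ν) := by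
  refine Real.le_sqrt_of_sq_le ?_
  have hvar := ProbabilityTheory.variance_nonneg f ν
  rw [ProbabilityTheory.variance_eq_sub hf] at hvar
  simp only [Pi.pow_apply] at hvar
  linarith

lemma MeasureTheory.Integrable.memLp_two_apply {α ι : Type*} [MeasurableSpace α]
    [Fintype ι] {ν : Measure α} {q : α → ι → ℝ} (hq : Measurable q)
    (hq2 : Integrable (fun x => ∑ k, q x k ^ 2) ν) (k : ι) :
    MemLp (fun x => q x k) 2 ν := by
  refine (memLp_two_iff_integrable_sq hq.eval.aestronglyMeasurable).2 <|
    hq2.mono' (hq.eval.pow_const 2).aestronglyMeasurable (ae_of_all _ fun x => ?_)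
  rw [Real.norm_of_nonneg (sq_nonneg _)]
  exact single_le_sum (fun k _ => sq_nonneg (q x k)) (mem_univ k)

lemma integrable_sum_sq_of_sum_eq_one {α ι : Type*} [MeasurableSpace α] [Fintype ι]
    {ν : Measure α} [IsFiniteMeasure ν] {p : α → ι → ℝ} (hp : Measurable p)
    (hp0 : ∀ x k, 0 ≤ p x k) (hp1 : ∀ x, ∑ k, p x k = 1) :
    Integrable (fun x => ∑ k, p x k ^ 2) ν := by
  refine (integrable_const 1).mono' (by fun_prop) (ae_of_all _ fun x => ?_)
  rw [Real.norm_of_nonneg (sum_nonneg fun k _ => sq_nonneg _), ← one_pow 2, ← hp1 x]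
  exact sum_sq_le_sq_sum_of_nonneg fun k _ => hp0 x k

lemma integral_sum_abs_le_sqrt_card_mul_integral_sum_sq {α ι : Type*} [MeasurableSpace α]
    [Fintype ι] {ν : Measure α} [IsProbabilityMeasure ν] {d : α → ι → ℝ}
    (hd : ∀ k, MemLp (fun x => d x k) 2 ν) :
    ∫ x, ∑ k, |d x k| ∂ν ≤ √(Fintype.card ι * ∫ x, ∑ k, d x k ^ 2 ∂ν) := by
  have hL1 : MemLp (fun x => ∑ k, |d x k|) 2 ν := memLp_finsetSum _ fun k _ => (hd k).abs
  have hsq : ∫ x, (∑ k, |d x k|) ^ 2 ∂ν ≤ Fintype.card ι * ∫ x, ∑ k, d x k ^ 2 ∂ν := by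
    rw [← integral_const_mul]
    refine integral_mono hL1.integrable_sq
      ((integrable_finsetSum _ fun k _ => (hd k).integrable_sq).const_mul _) fun x => ?_
    simpa using sq_sum_le_card_mul_sum_sq (s := univ) (f := fun k => |d x k|)
  exact (integral_le_sqrt_integral_sq hL1).trans (Real.sqrt_le_sqrt hsq)

section Disintegration

variable {X ι : Type*} [MeasurableSpace X] [Fintype ι] [MeasurableSpace ι]
  [MeasurableSingletonClass ι] {μ : Measure (X × ι)} {ν : Measure X}

lemma MeasureTheory.Measure.eq_sum_map_withDensity {q : X → ι → ℝ≥0∞}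
    (hq : ∀ A, MeasurableSet A → ∀ k, μ (A ×ˢ {k}) = ∫⁻ x in A, q x k ∂ν) :
    μ = ∑ k, (ν.withDensity (q · k)).map (·, k) := by
  ext S hS
  have hSk : ∀ k, MeasurableSet ((·, k) ⁻¹' S) := fun k => measurable_prodMk_right hS
  have hS_eq : S = ⋃ k, ((·, k) ⁻¹' S) ×ˢ {k} := by
    ext ⟨x, j⟩; simp
  simp_rw [Measure.finsetSum_apply, Measure.map_apply measurable_prodMk_right hS,
    withDensity_apply _ (hSk _), ← hq _ (hSk _)]
  conv_lhs => rw [hS_eq]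
  rw [measure_iUnion ?_ fun k => (hSk k).prod (measurableSet_singleton k), tsum_fintype]
  intro i j hij
  simp [Function.onFun, Set.disjoint_left, hij]

lemma integral_eq_integral_sum_mul_of_measure_prod_singleton {p : X → ι → ℝ} (hp : Measurable p)
    (hp0 : ∀ x k, 0 ≤ p x k)
    (hkernel : ∀ A, MeasurableSet A → ∀ k,
      μ (A ×ˢ {k}) = ∫⁻ x in A, ENNReal.ofReal (p x k) ∂ν)
    {F : X × ι → ℝ} (hF : Integrable F μ) :
    ∫ ω, F ω ∂μ = ∫ x, ∑ k, p x k * F (x, k) ∂ν := by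
  rw [Measure.eq_sum_map_withDensity hkernel] at hF ⊢
  rw [integrable_finsetSum_measure] at hF
  have hdens : ∀ k, Measurable fun x => ENNReal.ofReal (p x k) :=
    fun k => hp.eval.ennreal_ofReal
  have hfin : ∀ k, ∀ᵐ x ∂ν, ENNReal.ofReal (p x k) < ∞ :=
    fun k => ae_of_all _ fun _ => ENNReal.ofReal_lt_top
  have hFk : ∀ k, Integrable (fun x => p x k * F (x, k)) ν := by
    intro k
    have := (hF k (mem_univ k)).comp_measurable measurable_prodMk_right
    rw [integrable_withDensity_iff_integrable_smul' (hdens k) (hfin k)] at this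
    simpa [ENNReal.toReal_ofReal (hp0 _ k)] using this
  rw [integral_finsetSum_measure hF, integral_finsetSum _ fun k _ => hFk k]
  refine sum_congr rfl fun k _ => ?_
  rw [integral_map measurable_prodMk_right.aemeasurable (hF k (mem_univ k)).aestronglyMeasurable,
    integral_withDensity_eq_integral_toReal_smul (hdens k) (hfin k)]
  simp [ENNReal.toReal_ofReal (hp0 _ k)]

variable [DecidableEq ι] [IsFiniteMeasure μ]

lemma integrable_brierLoss_comp {q : X → ι → ℝ} (hq : Measurable q)
    (hq2 : Integrable (fun x => ∑ k, q x k ^ 2) (μ.map Prod.fst)) :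
    Integrable (fun ω : X × ι => brierLoss (q ω.1) ω.2) μ := by
  have hmeas : Measurable fun ω : X × ι => brierLoss (q ω.1) ω.2 :=
    measurable_from_prod_countable_left fun j => (measurable_brierLoss j).comp hq
  refine Integrable.mono' (((hq2.comp_measurable measurable_fst).const_mul 2).add
    (integrable_const 2)) hmeas.aestronglyMeasurable (ae_of_all _ fun ω => ?_)
  rw [Real.norm_of_nonneg (brierLoss_nonneg _ _)]
  exact brierLoss_le _ _

lemma integral_brierLoss_sub_integral_brierLoss {p a : X → ι → ℝ} (hp : Measurable p)
    (hp0 : ∀ x k, 0 ≤ p x k) (hp1 : ∀ x, ∑ k, p x k = 1)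
    (hkernel : ∀ A, MeasurableSet A → ∀ k,
      μ (A ×ˢ {k}) = ∫⁻ x in A, ENNReal.ofReal (p x k) ∂(μ.map Prod.fst))
    (hp2 : Integrable (fun x => ∑ k, p x k ^ 2) (μ.map Prod.fst))
    (ha : Measurable a) (ha2 : Integrable (fun x => ∑ k, a x k ^ 2) (μ.map Prod.fst)) :
    ∫ ω, brierLoss (a ω.1) ω.2 ∂μ - ∫ ω, brierLoss (p ω.1) ω.2 ∂μ
      = ∫ x, ∑ k, (a x k - p x k) ^ 2 ∂(μ.map Prod.fst) := by
  have hint_a := integrable_brierLoss_comp ha ha2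
  have hint_p := integrable_brierLoss_comp hp hp2
  rw [← integral_sub hint_a hint_p,
    integral_eq_integral_sum_mul_of_measure_prod_singleton
      (F := fun ω => brierLoss (a ω.1) ω.2 - brierLoss (p ω.1) ω.2)
      hp hp0 hkernel (hint_a.sub hint_p)]
  exact integral_congr_ae (ae_of_all _ fun x => sum_mul_brierLoss_sub_brierLoss (hp1 x) (a x))

end Disintegration

theorem population_risk_bound_via_brier_general
    {X : Type*} [MeasurableSpace X] (K : ℕ)
    (μ : Measure (X × Fin K)) [IsProbabilityMeasure μ]
    (p : X → Fin K → ℝ) (hp : Measurable p)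
    (hp0 : ∀ x k, 0 ≤ p x k) (hp1 : ∀ x, ∑ k, p x k = 1)
    (hkernel : ∀ (A : Set X), MeasurableSet A → ∀ k : Fin K,
      μ (A ×ˢ ({k} : Set (Fin K)))
        = ∫⁻ x in A, ENNReal.ofReal (p x k) ∂(μ.map Prod.fst))
    (fhat : X → Fin K)
    (ℓ : Fin K → Fin K → ℝ)
    (M : ℝ) (hℓbd : ∀ x k, |ℓ (fhat x) k| ≤ M)
    {Θ : Type*} (pθ : Θ → X → Fin K → ℝ) (hpθ : ∀ θ, Measurable (pθ θ))
    (hpθ2 : ∀ θ, Integrable (fun x => ∑ k, (pθ θ x k) ^ 2) (μ.map Prod.fst)) :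
    ∀ θ : Θ,
      (∫ x, |(∑ k, ℓ (fhat x) k * pθ θ x k) - ∑ k, ℓ (fhat x) k * p x k|
          ∂(μ.map Prod.fst))
        ≤ M * ∫ x, ∑ k, |pθ θ x k - p x k| ∂(μ.map Prod.fst) ∧
      M * (∫ x, ∑ k, |pθ θ x k - p x k| ∂(μ.map Prod.fst))
        ≤ M * Real.sqrt ((K : ℝ) *
            ((∫ ω, ∑ k, (pθ θ ω.1 k - (if ω.2 = k then (1 : ℝ) else 0)) ^ 2 ∂μ)
              - ∫ ω, ∑ k, (p ω.1 k - (if ω.2 = k then (1 : ℝ) else 0)) ^ 2 ∂μ)) := by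
  intro θ
  have : IsProbabilityMeasure (μ.map Prod.fst) :=
    Measure.isProbabilityMeasure_map measurable_fst.aemeasurable
  obtain ⟨x₀, k₀⟩ := nonempty_of_isProbabilityMeasure μ
  have hM : 0 ≤ M := (abs_nonneg _).trans (hℓbd x₀ k₀)
  have hp2 := integrable_sum_sq_of_sum_eq_one (ν := μ.map Prod.fst) hp hp0 hp1
  have hL2 : ∀ k, MemLp (fun x => pθ θ x k - p x k) 2 (μ.map Prod.fst) := fun k =>
    ((hpθ2 θ).memLp_two_apply (hpθ θ) k).sub (hp2.memLp_two_apply hp k)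
  have hL1 : Integrable (fun x => ∑ k, |pθ θ x k - p x k|) (μ.map Prod.fst) :=
    integrable_finsetSum _ fun k _ => ((hL2 k).integrable one_le_two).abs
  refine ⟨?_, mul_le_mul_of_nonneg_left ?_ hM⟩
  · rw [← integral_const_mul]
    exact integral_mono_of_nonneg (ae_of_all _ fun x => abs_nonneg _) (hL1.const_mul M)
      (ae_of_all _ fun x => abs_sum_mul_sub_sum_mul_le _ fun k _ => hℓbd x k)
  · refine (integral_sum_abs_le_sqrt_card_mul_integral_sum_sq hL2).trans_eq ?_
    rw [Fintype.card_fin,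
      ← integral_brierLoss_sub_integral_brierLoss hp hp0 hp1 hkernel hp2 (hpθ θ) (hpθ2 θ)]
    rfl

/-- **Theorem 1, population-risk bound.** Under the bound `|ℓ(f̂ x, k)| ≤ M`,
square-integrability of each `pθ θ`, and weak realizability, for every `θ`:
`E|g_{ca,θ}(X) − g(X)| ≤ M · E‖pθ θ X − p X‖₁ ≤ M √(K (B(θ) − B*))`, where `B(θ)` is the
expected Brier loss of `pθ θ` and `B*` that of the true conditional probability `p`. -/
theorem population_risk_bound_via_brier
    {X : Type*} [MeasurableSpace X] (K : ℕ) (hK : 1 ≤ K)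
    (μ : Measure (X × Fin K)) [IsProbabilityMeasure μ]
    (p : X → Fin K → ℝ) (hp : Measurable p)
    (hp0 : ∀ x k, 0 ≤ p x k) (hp1 : ∀ x, ∑ k, p x k = 1)
    (hkernel : ∀ (A : Set X), MeasurableSet A → ∀ k : Fin K,
      μ (A ×ˢ ({k} : Set (Fin K)))
        = ∫⁻ x in A, ENNReal.ofReal (p x k) ∂(μ.map Prod.fst))
    (fhat : X → Fin K) (hfhat : Measurable fhat)
    (ℓ : Fin K → Fin K → ℝ)
    (M : ℝ) (hℓbd : ∀ x k, |ℓ (fhat x) k| ≤ M)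
    {Θ : Type*} (pθ : Θ → X → Fin K → ℝ) (hpθ : ∀ θ, Measurable (pθ θ))
    (hpθ2 : ∀ θ, Integrable (fun x => ∑ k, (pθ θ x k) ^ 2) (μ.map Prod.fst))
    (θstar : Θ)
    (hreal : ∀ᵐ x ∂(μ.map Prod.fst), pθ θstar x = p x) :
    ∀ θ : Θ,
      (∫ x, |(∑ k, ℓ (fhat x) k * pθ θ x k) - ∑ k, ℓ (fhat x) k * p x k|
          ∂(μ.map Prod.fst))
        ≤ M * ∫ x, ∑ k, |pθ θ x k - p x k| ∂(μ.map Prod.fst) ∧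
      M * (∫ x, ∑ k, |pθ θ x k - p x k| ∂(μ.map Prod.fst))
        ≤ M * Real.sqrt ((K : ℝ) *
            ((∫ ω, ∑ k, (pθ θ ω.1 k - (if ω.2 = k then (1 : ℝ) else 0)) ^ 2 ∂μ)
              - ∫ ω, ∑ k, (p ω.1 k - (if ω.2 = k then (1 : ℝ) else 0)) ^ 2 ∂μ)) :=
  population_risk_bound_via_brier_general K μ p hp hp0 hp1 hkernel fhat ℓ M hℓbd pθ hpθ hpθ2
end
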